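/- Define D(λ) = k(1 + λ²) + (n - k)·ρ(1, λ) where ρ(1, λ) = 2(1 + λ²)Q(λ) - √(2/π)·λ·e^{-λ²/2}, with integers 0 < k < n. Then D is a strictly convex function of λ on (0, ∞). -/

import Mathlib

/-! The Gaussian terms cancel in the second derivative of `rho1`: `rho1'' = 4 Q ≥ 0`, so `rho1` is
convex, and adding the strictly convex `k (1 + λ²)` with `k > 0` gives strict convexity. -/

open Real

noncomputable def Qtail (x : ℝ) : ℝ := (1 / Real.sqrt (2 * π)) * ∫ t in Set.Ioi x, Real.exp (-t ^ 2 / 2)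

noncomputable def rho1 (τ : ℝ) : ℝ :=
  2 * (1 + τ ^ 2) * Qtail τ - Real.sqrt (2 / π) * τ * Real.exp (-τ ^ 2 / 2)

open MeasureTheory Set

theorem hasDerivAt_integral_Ioi {E : Type*} [NormedAddCommGroup E] [NormedSpace ℝ E]
    [CompleteSpace E] {f : ℝ → E} (hf : Integrable f) {x : ℝ} (hx : ContinuousAt f x) :
    HasDerivAt (fun u => ∫ t in Ioi u, f t) (-f x) x := by
  have hFTC : HasDerivAt (fun u => ∫ t in (0 : ℝ)..u, f t) (f x) x :=
    intervalIntegral.integral_hasDerivAt_right hf.intervalIntegrable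
      (hf.aestronglyMeasurable.stronglyMeasurableAtFilter) hx
  refine (hFTC.const_sub (∫ t in Ioi (0 : ℝ), f t)).congr_of_eventuallyEq ?_
  filter_upwards with u
  rw [← intervalIntegral.integral_Ioi_sub_Ioi' hf.integrableOn hf.integrableOn, sub_sub_cancel]

theorem integrable_exp_neg_sq_div_two : Integrable fun t : ℝ => exp (-t ^ 2 / 2) := by
  simpa [neg_div, div_eq_inv_mul] using integrable_exp_neg_mul_sq (b := 1 / 2) (by norm_num)

theorem hasDerivAt_exp_neg_sq_div_two (x : ℝ) :
    HasDerivAt (fun t : ℝ => exp (-t ^ 2 / 2)) (-x * exp (-x ^ 2 / 2)) x := by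
  simpa [mul_comm, neg_div] using ((hasDerivAt_pow 2 x).fun_neg.div_const 2).exp

theorem hasDerivAt_Qtail (x : ℝ) :
    HasDerivAt Qtail (-(exp (-x ^ 2 / 2) / √(2 * π))) x := by
  have h := hasDerivAt_integral_Ioi integrable_exp_neg_sq_div_two
    ((by fun_prop : Continuous fun t : ℝ => exp (-t ^ 2 / 2)).continuousAt (x := x))
  exact (h.const_mul (1 / √(2 * π))).congr_deriv (by ring)

theorem Qtail_nonneg (x : ℝ) : 0 ≤ Qtail x :=
  mul_nonneg (by positivity) (setIntegral_nonneg measurableSet_Ioi fun t _ => (exp_pos _).le)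

theorem sqrt_two_div_pi : √(2 / π) = 2 / √(2 * π) := by
  rw [eq_div_iff (by positivity), ← sqrt_mul (by positivity),
    show 2 / π * (2 * π) = 2 ^ 2 by field_simp, sqrt_sq zero_le_two]

theorem hasDerivAt_rho1 (x : ℝ) :
    HasDerivAt rho1 (4 * x * Qtail x - 2 * √(2 / π) * exp (-x ^ 2 / 2)) x := by
  have hpoly : HasDerivAt (fun τ : ℝ => 2 * (1 + τ ^ 2)) (2 * (2 * x)) x := by
    simpa using ((hasDerivAt_pow 2 x).const_add 1).const_mul 2
  have h := (hpoly.mul (hasDerivAt_Qtail x)).sub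
    (((hasDerivAt_id' x).const_mul √(2 / π)).mul (hasDerivAt_exp_neg_sq_div_two x))
  refine h.congr_deriv ?_
  rw [sqrt_two_div_pi]
  field_simp
  ring

theorem deriv_rho1 : deriv rho1 = fun x => 4 * x * Qtail x - 2 * √(2 / π) * exp (-x ^ 2 / 2) :=
  funext fun x => (hasDerivAt_rho1 x).deriv

theorem hasDerivAt_deriv_rho1 (x : ℝ) : HasDerivAt (deriv rho1) (4 * Qtail x) x := by
  rw [deriv_rho1]
  have h := (((hasDerivAt_id' x).const_mul 4).mul (hasDerivAt_Qtail x)).sub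
    ((hasDerivAt_exp_neg_sq_div_two x).const_mul (2 * √(2 / π)))
  refine h.congr_deriv ?_
  rw [sqrt_two_div_pi]
  field_simp
  ring

theorem convexOn_rho1 : ConvexOn ℝ univ rho1 :=
  convexOn_univ_of_deriv2_nonneg (fun x => (hasDerivAt_rho1 x).differentiableAt)
    (fun x => (hasDerivAt_deriv_rho1 x).differentiableAt) fun x => by
      rw [Function.iterate_succ_apply', Function.iterate_one, (hasDerivAt_deriv_rho1 x).deriv]
      exact mul_nonneg zero_le_four (Qtail_nonneg x)

theorem StrictConvexOn.const_mul {E : Type*} [AddCommMonoid E] [Module ℝ E] {s : Set E}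
    {f : E → ℝ} (hf : StrictConvexOn ℝ s f) {c : ℝ} (hc : 0 < c) :
    StrictConvexOn ℝ s fun x => c * f x := by
  refine ⟨hf.1, fun x hx y hy hxy a b ha hb hab => ?_⟩
  have h := hf.2 hx hy hxy ha hb hab
  simp only [smul_eq_mul] at h ⊢
  linarith [mul_lt_mul_of_pos_left h hc]

theorem strictConvexOn_mul_one_add_sq {c : ℝ} (hc : 0 < c) :
    StrictConvexOn ℝ univ fun x : ℝ => c * (1 + x ^ 2) := by
  have h := (Even.strictConvexOn_pow even_two two_ne_zero).add_const 1
  exact (h.const_mul hc).congr fun x _ => by simp [add_comm]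

theorem D_strictConvex (k n : ℕ) (hk : 0 < k) (hkn : k < n) :
    StrictConvexOn ℝ (Set.Ioi 0)
      (fun lam : ℝ => (k : ℝ) * (1 + lam ^ 2) + ((n : ℝ) - k) * rho1 lam) := by
  have hk' : (0 : ℝ) < k := by exact_mod_cast hk
  have hnk : (0 : ℝ) ≤ n - k := sub_nonneg.mpr (by exact_mod_cast hkn.le)
  exact ((strictConvexOn_mul_one_add_sq hk').add_convexOn (convexOn_rho1.smul hnk)).subset
    (subset_univ _) (convex_Ioi 0)
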